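/- Existence and uniqueness of reduced representatives: For every divisor d on a connected weightless loopless multigraph G and every vertex u ∈ V, there exists a unique u-reduced divisor d' linearly equivalent to d. -/

import Mathlib

open Finset

section Preliminaries

variable {V : Type} [Fintype V] [DecidableEq V]

/-- The degree of a divisor on a graph with vertex set `V`. -/
def degDiv (d : V → ℤ) : ℤ := ∑ v, d v

/-- A divisor is effective if it is nonnegative at every vertex. -/
def Effective (d : V → ℤ) : Prop := ∀ v, 0 ≤ d v

/-- The principal divisor `t_Z` associated to a subset `Z` of vertices, for the
graph with edge multiplicity function `m`. -/
def tZ (m : V → V → ℕ) (Z : Finset V) : V → ℤ := fun v =>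
  if v ∈ Z then -(∑ u ∈ Zᶜ, (m v u : ℤ)) else ∑ u ∈ Z, (m v u : ℤ)

/-- Two divisors are linearly equivalent if their difference lies in the subgroup
generated by the divisors `t_Z`. -/
def LinEquiv (m : V → V → ℕ) (d d' : V → ℤ) : Prop :=
  d - d' ∈ AddSubgroup.closure (Set.range (tZ m))

/-- The simple graph associated to an edge multiplicity function `m`
(an edge between distinct `u`, `v` whenever `m u v > 0`; loops are discarded). -/
def assocGraph (m : V → V → ℕ) : SimpleGraph V where
  Adj u v := u ≠ v ∧ (0 < m u v ∨ 0 < m v u)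
  symm := ⟨fun _ _ h => ⟨h.1.symm, h.2.symm⟩⟩
  loopless := ⟨fun _ h => h.1 rfl⟩

end Preliminaries

section Reduced

variable {V : Type} [Fintype V] [DecidableEq V]

/-- A divisor `d` is `u`-reduced if it is nonnegative away from `u`, and every
nonempty subset `A` of `V \ {u}` contains a vertex `v` with
`d v < ∑_{w ∉ A} m v w`. -/
def UReduced (m : V → V → ℕ) (u : V) (d : V → ℤ) : Prop :=
  (∀ v, v ≠ u → 0 ≤ d v) ∧
    ∀ A : Finset V, A.Nonempty → u ∉ A →
      ∃ v ∈ A, d v < ∑ w ∈ Aᶜ, (m v w : ℤ)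

end Reduced

/-!
Write linear equivalence as `d' = d + laplacian m f`. Uniqueness is a maximum principle: if `d`
and `d + laplacian m f` are both `u`-reduced, a nonempty set of maxima of `f` avoiding `u` would
contain a vertex where reducedness of `d` makes `d + laplacian m f` negative, so `f` is maximal at
`u`, and by symmetry also minimal there; hence `f` is constant.

For existence, take a potential `b` with `b u = 0`, `b ≥ 0` and `laplacian m b ≤ -1` off `u`
(exponential in the distance to `u`). Adding a multiple of `-laplacian m b` makes `d` nonnegative
off `u`, and among such representatives one minimising `∑ v, d v * b v` is `u`-reduced: firing a set
`A` that violates reducedness preserves nonnegativity and, the Laplacian being self-adjoint, changes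
the sum by `∑ v ∈ A, laplacian m b v < 0`.
-/

lemma SimpleGraph.Connected.dist_lt_card {V : Type*} [Fintype V] {G : SimpleGraph V}
    (hconn : G.Connected) (u v : V) : G.dist u v < Fintype.card V := by
  obtain ⟨p, hp⟩ := hconn.exists_walk_length_eq_dist u v
  exact hp ▸ (p.isPath_of_length_eq_dist hp).length_lt

lemma SimpleGraph.Connected.exists_adj_dist_add_one {V : Type*} {G : SimpleGraph V}
    (hconn : G.Connected) {u v : V} (h : v ≠ u) : ∃ w, G.Adj v w ∧ G.dist u w + 1 = G.dist u v := by
  obtain ⟨p, hp⟩ := hconn.exists_walk_length_eq_dist v u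
  cases p with
  | nil => exact absurd rfl h
  | @cons _ w _ hadj q =>
    refine ⟨w, hadj, ?_⟩
    have hq : G.dist u w ≤ q.length := by simpa using SimpleGraph.dist_le q.reverse
    rw [SimpleGraph.Walk.length_cons, SimpleGraph.dist_comm] at hp
    have := hadj.symm.diff_dist_adj (u := u)
    omega

section Laplacian

variable {V : Type} [Fintype V]

/-- Adding `laplacian m f` to a divisor fires every vertex `v` exactly `f v` times
(this is minus the usual graph Laplacian). -/
def laplacian (m : V → V → ℕ) : (V → ℤ) →+ (V → ℤ) where
  toFun f v := ∑ w, (m v w : ℤ) * (f w - f v)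
  map_zero' := by ext; simp
  map_add' f g := by
    ext v
    simp only [Pi.add_apply, ← sum_add_distrib]
    exact sum_congr rfl fun w _ => by ring

lemma laplacian_apply (m : V → V → ℕ) (f : V → ℤ) (v : V) :
    laplacian m f v = ∑ w, (m v w : ℤ) * (f w - f v) := rfl

lemma laplacian_const (m : V → V → ℕ) (c : ℤ) : laplacian m (fun _ => c) = 0 := by
  ext v; simp [laplacian_apply]

lemma sum_laplacian_mul_comm {m : V → V → ℕ} (hsymm : ∀ u v, m u v = m v u) (f g : V → ℤ) :
    ∑ v, laplacian m f v * g v = ∑ v, f v * laplacian m g v := by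
  simp only [laplacian_apply, sum_mul, mul_sum, mul_sub, sub_mul, sum_sub_distrib]
  congr 1
  · rw [sum_comm]
    exact sum_congr rfl fun v _ => sum_congr rfl fun w _ => by rw [hsymm]; ring
  · exact sum_congr rfl fun v _ => sum_congr rfl fun w _ => by ring

variable [DecidableEq V]

lemma tZ_eq_laplacian (m : V → V → ℕ) (Z : Finset V) :
    tZ m Z = laplacian m (fun v => if v ∈ Z then 1 else 0) := by
  ext v
  by_cases hv : v ∈ Z
  · simp only [tZ, laplacian_apply, hv, if_true, mul_sub, mul_ite, mul_one, mul_zero,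
      sum_sub_distrib, sum_ite_mem, univ_inter]
    rw [← sum_add_sum_compl Z]
    ring
  · simp [tZ, laplacian_apply, hv]

lemma closure_range_tZ (m : V → V → ℕ) :
    AddSubgroup.closure (Set.range (tZ m)) = (laplacian m).range := by
  refine le_antisymm ?_ ?_
  · rw [AddSubgroup.closure_le]
    rintro _ ⟨Z, rfl⟩
    exact ⟨_, (tZ_eq_laplacian m Z).symm⟩
  · rintro _ ⟨f, rfl⟩
    rw [← univ_sum_single f, map_sum]
    refine AddSubgroup.sum_mem _ fun w _ => ?_
    have hsingle : (Pi.single w (f w) : V → ℤ) =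
        f w • fun v => if v ∈ ({w} : Finset V) then 1 else 0 := by
      ext v; by_cases hv : v = w <;> simp [hv]
    rw [hsingle, map_zsmul, ← tZ_eq_laplacian]
    exact AddSubgroup.zsmul_mem _ (AddSubgroup.subset_closure (Set.mem_range_self _)) _

end Laplacian

section LinEquiv

variable {V : Type} [Fintype V] [DecidableEq V] {m : V → V → ℕ}

lemma linEquiv_iff {d d' : V → ℤ} : LinEquiv m d d' ↔ ∃ f, d' = d + laplacian m f := by
  rw [LinEquiv, closure_range_tZ]
  constructor
  · rintro ⟨f, hf⟩
    exact ⟨-f, by rw [map_neg, hf]; abel⟩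
  · rintro ⟨f, rfl⟩
    exact ⟨-f, by rw [map_neg]; abel⟩

lemma LinEquiv.symm {d d' : V → ℤ} (h : LinEquiv m d d') : LinEquiv m d' d := by
  rw [LinEquiv, ← neg_sub]
  exact neg_mem h

lemma LinEquiv.trans {d d' d'' : V → ℤ} (h : LinEquiv m d d') (h' : LinEquiv m d' d'') :
    LinEquiv m d d'' := by
  rw [LinEquiv, ← sub_add_sub_cancel]
  exact add_mem h h'

lemma LinEquiv.add_tZ {d d' : V → ℤ} (h : LinEquiv m d d') (Z : Finset V) :
    LinEquiv m d (d' + tZ m Z) := by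
  rw [LinEquiv, ← sub_sub]
  exact sub_mem h (AddSubgroup.subset_closure ⟨Z, rfl⟩)

end LinEquiv

section Uniqueness

variable {V : Type} [Fintype V] [DecidableEq V] {m : V → V → ℕ} {u : V}

lemma UReduced.apply_le_apply_of_nonneg {d f : V → ℤ} (hd : UReduced m u d)
    (hnn : ∀ v, v ≠ u → 0 ≤ (d + laplacian m f) v) (v : V) : f v ≤ f u := by
  by_contra! hlt
  obtain ⟨x, -, hx⟩ := exists_max_image univ f ⟨v, mem_univ v⟩
  set A := univ.filter fun w => f w = f x
  have huA : u ∉ A := by simpa [A] using (hlt.trans_le (hx v (mem_univ v))).ne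
  obtain ⟨y, hyA, hy⟩ := hd.2 A ⟨x, by simp [A]⟩ huA
  have hfy : f y = f x := (mem_filter.1 hyA).2
  have hlap : laplacian m f y ≤ -∑ w ∈ Aᶜ, (m y w : ℤ) := by
    rw [laplacian_apply, ← sum_add_sum_compl A, ← sum_neg_distrib]
    have hA : ∑ w ∈ A, (m y w : ℤ) * (f w - f y) = 0 :=
      sum_eq_zero fun w hw => by rw [(mem_filter.1 hw).2, hfy, sub_self, mul_zero]
    rw [hA, zero_add]
    refine sum_le_sum fun w hw => ?_
    have : f w < f y := hfy ▸ lt_of_le_of_ne (hx w (mem_univ w)) (by simpa [A] using hw)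
    nlinarith [(m y w).cast_nonneg (α := ℤ)]
  have := hnn y fun h => huA (h ▸ hyA)
  rw [Pi.add_apply] at this
  linarith

theorem UReduced.eq_of_linEquiv {d₁ d₂ : V → ℤ} (h₁ : UReduced m u d₁) (h₂ : UReduced m u d₂)
    (h : LinEquiv m d₁ d₂) : d₁ = d₂ := by
  obtain ⟨f, rfl⟩ := linEquiv_iff.1 h
  have hmax : ∀ v, f v ≤ f u := h₁.apply_le_apply_of_nonneg h₂.1
  have hmin : ∀ v, -f v ≤ -f u :=
    h₂.apply_le_apply_of_nonneg (f := -f) (by rw [map_neg, add_neg_cancel_right]; exact h₁.1)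
  have hconst : f = fun _ => f u :=
    funext fun v => le_antisymm (hmax v) (neg_le_neg_iff.1 (hmin v))
  rw [hconst, laplacian_const, add_zero]

end Uniqueness

section Existence

variable {V : Type} [Fintype V] [DecidableEq V] {m : V → V → ℕ}

/-- The neighbour of `v` one step closer to `u` contributes `M * Q` with `Q = (M - 1) * M ^ k`,
while every other edge at `v` costs at most `Q`, and there are at most `M - 2` of them. -/
lemma one_le_laplacian_pow_dist (hsymm : ∀ u v, m u v = m v u) (hconn : (assocGraph m).Connected)
    {M : ℕ} {u v : V} (hM : ∑ w, m v w + 2 ≤ M) (hv : v ≠ u) :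
    1 ≤ laplacian m (fun x => (M : ℤ) ^ (Fintype.card V - (assocGraph m).dist u x)) v := by
  set G := assocGraph m
  set n := Fintype.card V
  obtain ⟨w₀, hadj, hw₀⟩ := hconn.exists_adj_dist_add_one hv
  have hvn := hconn.dist_lt_card u v
  set k := n - G.dist u v - 1
  have hM2 : (2 : ℤ) ≤ M := by exact_mod_cast (by omega : 2 ≤ M)
  have hM1 : (1 : ℤ) ≤ M := by linarith
  set Q : ℤ := (M - 1) * M ^ k
  have hQ : 1 ≤ Q := one_le_mul_of_one_le_of_one_le (by linarith) (one_le_pow₀ hM1)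
  have hterm : ∀ w,
      -(m v w : ℤ) * Q ≤ m v w * ((M : ℤ) ^ (n - G.dist u w) - M ^ (n - G.dist u v)) := by
    intro w
    rcases Nat.eq_zero_or_pos (m v w) with h0 | h0
    · simp [h0]
    have hdist : G.dist u w ≤ G.dist u v + 1 := by
      rcases eq_or_ne v w with rfl | hne
      · omega
      · have := (show G.Adj v w from ⟨hne, Or.inl h0⟩).diff_dist_adj (u := u)
        omega
    have hpow : (M : ℤ) ^ k ≤ M ^ (n - G.dist u w) := pow_le_pow_right₀ hM1 (by omega)
    rw [show n - G.dist u v = k + 1 by omega, pow_succ]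
    nlinarith [(m v w).cast_nonneg (α := ℤ)]
  have hterm₀ : (m v w₀ : ℤ) * ((M : ℤ) ^ (n - G.dist u w₀) - M ^ (n - G.dist u v)) =
      m v w₀ * (M * Q) := by
    rw [show n - G.dist u w₀ = k + 2 by omega, show n - G.dist u v = k + 1 by omega]
    ring
  have hm₀ : (1 : ℤ) ≤ m v w₀ := by
    have : 0 < m v w₀ := hadj.2.elim id fun h => hsymm v w₀ ▸ h
    exact_mod_cast this
  have hdeg : (m v w₀ : ℤ) + ∑ w ∈ univ.erase w₀, (m v w : ℤ) + 2 ≤ M := by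
    rw [add_sum_erase univ (fun w => (m v w : ℤ)) (mem_univ w₀)]
    exact_mod_cast hM
  have hrest : -(∑ w ∈ univ.erase w₀, (m v w : ℤ)) * Q ≤
      ∑ w ∈ univ.erase w₀, (m v w : ℤ) * ((M : ℤ) ^ (n - G.dist u w) - M ^ (n - G.dist u v)) := by
    rw [neg_mul, sum_mul, ← sum_neg_distrib]
    exact sum_le_sum fun w _ => by simpa using hterm w
  rw [laplacian_apply, ← add_sum_erase _ _ (mem_univ w₀), hterm₀]
  nlinarith [mul_le_mul_of_nonneg_right hm₀ (by positivity : (0 : ℤ) ≤ M * Q),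
    mul_le_mul_of_nonneg_right (by linarith : ∑ w ∈ univ.erase w₀, (m v w : ℤ) + 2 ≤ M)
      (by positivity : (0 : ℤ) ≤ Q)]

lemma exists_potential (hsymm : ∀ u v, m u v = m v u) (hconn : (assocGraph m).Connected) (u : V) :
    ∃ b : V → ℤ, b u = 0 ∧ (∀ v, 0 ≤ b v) ∧ ∀ v, v ≠ u → laplacian m b v ≤ -1 := by
  set M := ∑ v, ∑ w, m v w + 2
  set c : V → ℤ := fun x => (M : ℤ) ^ (Fintype.card V - (assocGraph m).dist u x)
  have hM1 : (1 : ℤ) ≤ M := by exact_mod_cast (by omega : 1 ≤ M)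
  refine ⟨(fun _ => c u) - c, by simp, fun v => ?_, fun v hv => ?_⟩
  · exact sub_nonneg.2 (pow_le_pow_right₀ hM1 (by simp))
  · have hM : ∑ w, m v w + 2 ≤ M := by
      have := single_le_sum (f := fun v => ∑ w, m v w) (fun _ _ => Nat.zero_le _) (mem_univ v)
      omega
    have := one_le_laplacian_pow_dist hsymm hconn hM hv
    rw [map_sub, laplacian_const, zero_sub, Pi.neg_apply]
    linarith

lemma sum_tZ_mul_neg (hsymm : ∀ u v, m u v = m v u) {u : V} {b : V → ℤ}
    (hb : ∀ v, v ≠ u → laplacian m b v ≤ -1) {A : Finset V} (hA : A.Nonempty) (hu : u ∉ A) :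
    ∑ v, tZ m A v * b v < 0 := by
  rw [tZ_eq_laplacian, sum_laplacian_mul_comm hsymm]
  simp only [ite_mul, one_mul, zero_mul, sum_ite_mem, univ_inter]
  calc ∑ v ∈ A, laplacian m b v ≤ ∑ v ∈ A, (-1 : ℤ) :=
        sum_le_sum fun v hv => hb v (ne_of_mem_of_not_mem hv hu)
    _ < 0 := by simpa using hA.card_pos

lemma nonneg_add_tZ {u : V} {d : V → ℤ} {A : Finset V} (hd : ∀ v, v ≠ u → 0 ≤ d v)
    (hA : ∀ v ∈ A, ∑ w ∈ Aᶜ, (m v w : ℤ) ≤ d v) : ∀ v, v ≠ u → 0 ≤ (d + tZ m A) v := by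
  intro v hv
  simp only [Pi.add_apply, tZ]
  split_ifs with hvA
  · linarith [hA v hvA]
  · linarith [hd v hv, sum_nonneg fun w (_ : w ∈ A) => (m v w).cast_nonneg (α := ℤ)]

lemma exists_linEquiv_nonneg {u : V} {b : V → ℤ} (hb : ∀ v, v ≠ u → laplacian m b v ≤ -1)
    (d : V → ℤ) : ∃ d', LinEquiv m d d' ∧ ∀ v, v ≠ u → 0 ≤ d' v := by
  set K := ∑ v, |d v|
  refine ⟨d + laplacian m (-(K • b)), linEquiv_iff.2 ⟨_, rfl⟩, fun v hv => ?_⟩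
  have hK : |d v| ≤ K := single_le_sum (fun w _ => abs_nonneg (d w)) (mem_univ v)
  simp only [Pi.add_apply, map_neg, map_zsmul, Pi.neg_apply, Pi.smul_apply, smul_eq_mul]
  nlinarith [hb v hv, neg_abs_le (d v), abs_nonneg (d v)]

theorem exists_linEquiv_uReduced (hsymm : ∀ u v, m u v = m v u)
    (hconn : (assocGraph m).Connected) (d : V → ℤ) (u : V) :
    ∃ d', LinEquiv m d d' ∧ UReduced m u d' := by
  obtain ⟨b, hbu, hb0, hb⟩ := exists_potential hsymm hconn u
  let S : Set (V → ℤ) := {d' | LinEquiv m d d' ∧ ∀ v, v ≠ u → 0 ≤ d' v}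
  have hS : ∀ d' ∈ S, 0 ≤ ∑ v, d' v * b v := fun d' hd' => sum_nonneg fun v _ => by
    rcases eq_or_ne v u with rfl | hv
    · simp [hbu]
    · exact mul_nonneg (hd'.2 v hv) (hb0 v)
  obtain ⟨d₀, ⟨hlin, hnn⟩, hmin⟩ :=
    (measure fun d' : V → ℤ => (∑ v, d' v * b v).toNat).wf.has_min S (exists_linEquiv_nonneg hb d)
  refine ⟨d₀, hlin, hnn, fun A hA hu => ?_⟩
  by_contra! hfire
  have hS₁ : d₀ + tZ m A ∈ S := ⟨hlin.add_tZ A, nonneg_add_tZ hnn hfire⟩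
  apply hmin _ hS₁
  have hdec := sum_tZ_mul_neg hsymm hb hA hu
  have := hS _ hS₁
  show (∑ v, (d₀ + tZ m A) v * b v).toNat < (∑ v, d₀ v * b v).toNat
  simp only [Pi.add_apply, add_mul, sum_add_distrib] at this ⊢
  omega

end Existence

theorem exists_unique_reduced_general {V : Type} [Fintype V] [DecidableEq V]
    (m : V → V → ℕ) (hsymm : ∀ u v, m u v = m v u)
    (hconn : (assocGraph m).Connected)
    (d : V → ℤ) (u : V) :
    ∃! d' : V → ℤ, LinEquiv m d d' ∧ UReduced m u d' := by
  obtain ⟨d₀, hd₀⟩ := exists_linEquiv_uReduced hsymm hconn d u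
  exact ⟨d₀, hd₀, fun d' hd' => hd'.2.eq_of_linEquiv hd₀.2 (hd'.1.symm.trans hd₀.1)⟩

/-- **Existence and uniqueness of reduced representatives.** -/
theorem exists_unique_reduced {V : Type} [Fintype V] [DecidableEq V]
    (m : V → V → ℕ) (hsymm : ∀ u v, m u v = m v u) (hloop : ∀ v, m v v = 0)
    (hconn : (assocGraph m).Connected)
    (d : V → ℤ) (u : V) :
    ∃! d' : V → ℤ, LinEquiv m d d' ∧ UReduced m u d' :=
  exists_unique_reduced_general m hsymm hconn d u
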